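/- Let χ : {1,…,n} → {ℓ,c,r}. If χ⁻¹(c) ⊆ {1, n}, then IBNC(χ) = NC(χ), i.e. every χ-noncrossing partition is automatically a χ-interval partition. -/
import Mathlib


namespace FFB

/-- The three letters ℓ, c, r labelling the faces. -/
inductive Letter : Type where
  | l | c | r
deriving DecidableEq

/-- `x` is one of the letters `ℓ`, `c`. -/
def isLC (x : Letter) : Prop := x = Letter.l ∨ x = Letter.c

variable {α : Type*}

/-- The total order `≺_χ` on the index set determined by `χ`:
the elements of `χ⁻¹{ℓ,c}` in increasing order followed by the elements of
`χ⁻¹{r}` in decreasing order. -/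
def chiLT [LT α] (χ : α → Letter) (i j : α) : Prop :=
  (isLC (χ i) ∧ isLC (χ j) ∧ i < j)
  ∨ (isLC (χ i) ∧ χ j = Letter.r)
  ∨ (χ i = Letter.r ∧ χ j = Letter.r ∧ j < i)

/-- A partition (equivalence relation) `π` is `χ`-noncrossing if there is no quadruple
`s₁ ≺_χ r₁ ≺_χ s₂ ≺_χ r₂` with `s₁ ∼ s₂`, `r₁ ∼ r₂` lying in different blocks. -/
def ChiNoncrossing [LT α] (χ : α → Letter) (π : Setoid α) : Prop :=
  ∀ s₁ r₁ s₂ r₂ : α, chiLT χ s₁ r₁ → chiLT χ r₁ s₂ → chiLT χ s₂ r₂ →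
    π s₁ s₂ → π r₁ r₂ → π s₁ r₁

/-- A partition `π` is `χ`-interval if whenever `i < j < k`, `i ∼ k` and `χ j = c`,
then `i, j, k` all lie in the same block. -/
def ChiInterval [LT α] (χ : α → Letter) (π : Setoid α) : Prop :=
  ∀ i j k : α, i < j → j < k → χ j = Letter.c → π i k → π i j

/-- The set of interval-bi-noncrossing partitions with respect to `χ`. -/
def IBNC [LT α] (χ : α → Letter) : Set (Setoid α) :=
  {π | ChiNoncrossing χ π ∧ ChiInterval χ π}

/-- The set of `χ`-noncrossing partitions. -/
def NC [LT α] (χ : α → Letter) : Set (Setoid α) :=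
  {π | ChiNoncrossing χ π}

/-- Restriction of a partition of `α` to a subset `V ⊆ α`. -/
def restrict (V : Set α) (σ : Setoid α) : Setoid V := Setoid.comap Subtype.val σ

/-- Restriction of `χ` to a subset `V ⊆ α`. -/
def restChi (V : Set α) (χ : α → Letter) : V → Letter := fun x => χ x.1

/- `mu` is the Möbius function of the finite poset `P` (with the induced order):
it is the (two-sided) convolution inverse of the zeta function. -/
open Classical in
def IsMobius {β : Type*} [PartialOrder β] (P : Set β) (mu : β → β → ℂ) : Prop :=
  ∀ a ∈ P, ∀ b ∈ P, a ≤ b →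
    ((∑ᶠ c ∈ {c | c ∈ P ∧ a ≤ c ∧ c ≤ b}, mu a c) = if a = b then 1 else 0) ∧
    ((∑ᶠ c ∈ {c | c ∈ P ∧ a ≤ c ∧ c ≤ b}, mu c b) = if a = b then 1 else 0)

section Moments

variable {A : Type*} [Ring A] [LinearOrder α] [Finite α]

/-- `φ_V(z₁,…,zₙ) = φ(z_{l₁} ⋯ z_{l_k})` where `V = {l₁ < ⋯ < l_k}`. -/
noncomputable def phiV (φ : A → ℂ) (z : α → A) (V : Set α) : ℂ :=
  φ (((Set.toFinite V).toFinset.sort (· ≤ ·)).map z).prod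

/-- `φ_σ(z₁,…,zₙ) = ∏_{V ∈ σ} φ_V(z₁,…,zₙ)`. -/
noncomputable def phiPart (φ : A → ℂ) (z : α → A) (σ : Setoid α) : ℂ :=
  ∏ᶠ q : Quotient σ, phiV φ z {y | Quotient.mk σ y = q}

/-- The free-free-Boolean cumulant
`κ_{χ,π}(z₁,…,zₙ) = Σ_{σ ∈ IBNC(χ), σ ≤ π} μ_{IBNC(χ)}(σ,π) φ_σ(z₁,…,zₙ)`,
where `mu` is (a function which is) the Möbius function of `IBNC(χ)`. -/
noncomputable def cum (φ : A → ℂ) (χ : α → Letter)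
    (mu : Setoid α → Setoid α → ℂ) (z : α → A) (π : Setoid α) : ℂ :=
  ∑ᶠ σ ∈ {σ | σ ∈ IBNC χ ∧ σ ≤ π}, mu σ π * phiPart φ z σ

end Moments

/-- Combinatorial free-free-Boolean independence: mixed cumulants vanish.
`F i x` is the face of the `i`-th triple labelled by the letter `x`. -/
def CombFFB {A : Type*} [Ring A] [Algebra ℂ A] (φ : A →ₗ[ℂ] ℂ) {I : Type*}
    (F : I → Letter → NonUnitalSubalgebra ℂ A) : Prop :=
  ∀ (n : ℕ) (χ : Fin n → Letter) (ω : Fin n → I) (z : Fin n → A),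
    (∀ k, z k ∈ F (ω k) (χ k)) → (¬ ∃ i, ∀ k, ω k = i) →
    ∀ mu : Setoid (Fin n) → Setoid (Fin n) → ℂ, IsMobius (IBNC χ) mu →
      cum (⇑φ) χ mu z ⊤ = 0

end FFB

namespace FFB

/-- If `χ⁻¹(c) ⊆ {1, n}` (in 1-indexed notation, i.e. `c` occurs only at the
first or last position), then `IBNC(χ) = NC(χ)`: every `χ`-noncrossing partition is
automatically a `χ`-interval partition. -/
theorem IBNC_eq_NC_of_c_only_at_endpoints (n : ℕ) (χ : Fin n → Letter)
    (h : ∀ j : Fin n, χ j = Letter.c → (j : ℕ) = 0 ∨ (j : ℕ) + 1 = n) :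
    IBNC χ = NC χ := by
  ext π
  simp only [IBNC, NC, Set.mem_setOf_eq, and_iff_left_iff_imp]
  intro _ i j k hij hjk hc _
  rcases h j hc with h0 | hn
  · exact absurd (Fin.lt_iff_val_lt_val.mp hij) (by omega)
  · have := Fin.lt_iff_val_lt_val.mp hjk
    have := k.isLt
    omega

end FFB
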